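/- arXiv:1206.3472 — 5 statements merged into one kernel-verified Lean document; each statement's English description precedes it below -/
import Mathlib

section
/- Let X be a finite set with |X| ≥ 4 and S = {Y₁,…,Yₖ} a collection of subsets of X satisfying the four-way partition property. Then every 3-element subset {x,y,z} of X is contained in some Yⱼ with |Yⱼ| ≥ 4. -/
/-!
Split `X` into the three singletons of the triple `T` and the rest `X \ T`, which is nonempty
since `|X| ≥ 4`. The four-way partition property yields a member `Y` of `S` containing `T`
together with a point outside `T`, so `|Y| ≥ 4`.
-/

section

open Finset

variable {α : Type*} [DecidableEq α]

def FourWayPartitionProperty (X : Finset α) (S : Finset (Finset α)) : Prop :=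
  ∀ X1 X2 X3 X4 : Finset α,
    X1.Nonempty → X2.Nonempty → X3.Nonempty → X4.Nonempty →
    X1 ∪ X2 ∪ X3 ∪ X4 = X →
    Disjoint X1 X2 → Disjoint X1 X3 → Disjoint X1 X4 →
    Disjoint X2 X3 → Disjoint X2 X4 → Disjoint X3 X4 →
    ∃ x1 ∈ X1, ∃ x2 ∈ X2, ∃ x3 ∈ X3, ∃ x4 ∈ X4,
      ∃ Y ∈ S, ({x1, x2, x3, x4} : Finset α) ⊆ Y

lemma singletons_union_sdiff_eq {X : Finset α} {x y z : α} (h : {x, y, z} ⊆ X) :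
    {x} ∪ {y} ∪ {z} ∪ (X \ {x, y, z}) = X := by
  rw [← union_sdiff_of_subset h]
  ext a
  simp

lemma FourWayPartitionProperty.exists_insert_subset {X : Finset α} {S : Finset (Finset α)}
    (hS : FourWayPartitionProperty X S) {x y z : α} (hxy : x ≠ y) (hxz : x ≠ z) (hyz : y ≠ z)
    (hX : {x, y, z} ⊆ X) (hrest : (X \ {x, y, z}).Nonempty) :
    ∃ w ∉ ({x, y, z} : Finset α), ∃ Y ∈ S, insert w {x, y, z} ⊆ Y := by
  obtain ⟨x1, hx1, x2, hx2, x3, hx3, w, hw, Y, hYS, hY⟩ :=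
    hS {x} {y} {z} (X \ {x, y, z}) (singleton_nonempty x) (singleton_nonempty y)
      (singleton_nonempty z) hrest (singletons_union_sdiff_eq hX)
      (by simpa using hxy) (by simpa using hxz) (by simp) (by simpa using hyz) (by simp) (by simp)
  rw [mem_singleton] at hx1 hx2 hx3
  subst hx1 hx2 hx3
  refine ⟨w, (mem_sdiff.mp hw).2, Y, hYS, ?_⟩
  intro a ha
  apply hY
  simp only [mem_insert, mem_singleton] at ha ⊢
  tauto

end

theorem triple_in_big_set_of_fourWay_general {α : Type*} [DecidableEq α]
    (X : Finset α) (hX : 4 ≤ X.card) (S : Finset (Finset α))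
    (hfour : ∀ X1 X2 X3 X4 : Finset α,
      X1.Nonempty → X2.Nonempty → X3.Nonempty → X4.Nonempty →
      X1 ∪ X2 ∪ X3 ∪ X4 = X →
      Disjoint X1 X2 → Disjoint X1 X3 → Disjoint X1 X4 →
      Disjoint X2 X3 → Disjoint X2 X4 → Disjoint X3 X4 →
      ∃ x1 ∈ X1, ∃ x2 ∈ X2, ∃ x3 ∈ X3, ∃ x4 ∈ X4,
        ∃ Y ∈ S, ({x1, x2, x3, x4} : Finset α) ⊆ Y) :
    ∀ T : Finset α, T ⊆ X → T.card = 3 → ∃ Y ∈ S, T ⊆ Y ∧ 4 ≤ Y.card := by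
  intro T hTX hT3
  obtain ⟨x, y, z, hxy, hxz, hyz, rfl⟩ := Finset.card_eq_three.mp hT3
  have hrest : (X \ {x, y, z}).Nonempty := by
    rw [← Finset.card_pos, Finset.card_sdiff_of_subset hTX, hT3]
    omega
  obtain ⟨w, hw, Y, hYS, hY⟩ :=
    FourWayPartitionProperty.exists_insert_subset hfour hxy hxz hyz hTX hrest
  refine ⟨Y, hYS, (Finset.subset_insert w _).trans hY, ?_⟩
  calc 4 = (insert w {x, y, z} : Finset α).card := by rw [Finset.card_insert_of_notMem hw, hT3]
    _ ≤ Y.card := Finset.card_le_card hY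

/-- If `|X| ≥ 4` and the collection `S` of subsets of `X` satisfies the four-way partition
property, then every 3-element subset of `X` is contained in some member `Y` of `S`
with `|Y| ≥ 4`. -/
theorem triple_in_big_set_of_fourWay {α : Type*} [DecidableEq α]
    (X : Finset α) (hX : 4 ≤ X.card) (S : Finset (Finset α)) (hS : ∀ Y ∈ S, Y ⊆ X)
    (hfour : ∀ X1 X2 X3 X4 : Finset α,
      X1.Nonempty → X2.Nonempty → X3.Nonempty → X4.Nonempty →
      X1 ∪ X2 ∪ X3 ∪ X4 = X →
      Disjoint X1 X2 → Disjoint X1 X3 → Disjoint X1 X4 →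
      Disjoint X2 X3 → Disjoint X2 X4 → Disjoint X3 X4 →
      ∃ x1 ∈ X1, ∃ x2 ∈ X2, ∃ x3 ∈ X3, ∃ x4 ∈ X4,
        ∃ Y ∈ S, ({x1, x2, x3, x4} : Finset α) ⊆ Y) :
    ∀ T : Finset α, T ⊆ X → T.card = 3 → ∃ Y ∈ S, T ⊆ Y ∧ 4 ≤ Y.card :=
  triple_in_big_set_of_fourWay_general X hX S hfour
end

section
/- Let X be a finite set and ρ ∉ X a new element. Set X̃ = X ∪ {ρ} and, for a collection S = {Y₁,…,Yₖ} of subsets of X, set Ỹᵢ = Yᵢ ∪ {ρ}. Then the collection S̃ = {Ỹ₁,…,Ỹₖ} satisfies the four-way partition property on X̃ if and only if every 3-element subset of X is contained in some Yᵢ. -/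
private lemma aux_triple {α : Type*} [DecidableEq α]
    (X : Finset α) (ρ : α)
    (S : Finset (Finset α))
    (h3 : ∀ T : Finset α, T ⊆ X → T.card = 3 → ∃ Y ∈ S, T ⊆ Y)
    (A B C : Finset α) (hA : A.Nonempty) (hB : B.Nonempty) (hC : C.Nonempty)
    (hAU : A ⊆ insert ρ X) (hBU : B ⊆ insert ρ X) (hCU : C ⊆ insert ρ X)
    (hρA : ρ ∉ A) (hρB : ρ ∉ B) (hρC : ρ ∉ C)
    (dAB : Disjoint A B) (dAC : Disjoint A C) (dBC : Disjoint B C) :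
    ∃ a ∈ A, ∃ b ∈ B, ∃ c ∈ C, ∃ Y ∈ S, a ∈ Y ∧ b ∈ Y ∧ c ∈ Y := by
  obtain ⟨a, ha⟩ := hA
  obtain ⟨b, hb⟩ := hB
  obtain ⟨c, hc⟩ := hC
  have haX : a ∈ X := by
    rcases Finset.mem_insert.mp (hAU ha) with h | h
    · exact absurd (h ▸ ha) hρA
    · exact h
  have hbX : b ∈ X := by
    rcases Finset.mem_insert.mp (hBU hb) with h | h
    · exact absurd (h ▸ hb) hρB
    · exact h
  have hcX : c ∈ X := by
    rcases Finset.mem_insert.mp (hCU hc) with h | h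
    · exact absurd (h ▸ hc) hρC
    · exact h
  have hab : a ≠ b := fun h => Finset.disjoint_left.mp dAB ha (h ▸ hb)
  have hac : a ≠ c := fun h => Finset.disjoint_left.mp dAC ha (h ▸ hc)
  have hbc : b ≠ c := fun h => Finset.disjoint_left.mp dBC hb (h ▸ hc)
  have hcard : ({a, b, c} : Finset α).card = 3 := by
    rw [Finset.card_insert_of_notMem (by simp [hab, hac]),
      Finset.card_insert_of_notMem (by simp [hbc]), Finset.card_singleton]
  have hsub : ({a, b, c} : Finset α) ⊆ X := by
    intro x hx
    simp only [Finset.mem_insert, Finset.mem_singleton] at hx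
    rcases hx with rfl | rfl | rfl <;> assumption
  obtain ⟨Y, hY, hTY⟩ := h3 _ hsub hcard
  exact ⟨a, ha, b, hb, c, hc, Y, hY, hTY (by simp), hTY (by simp), hTY (by simp)⟩

/-- Let `ρ ∉ X` and `X̃ = X ∪ {ρ}`, and for `S = {Y₁,…,Yₖ}` let `S̃ = {Yᵢ ∪ {ρ}}`.
Then `S̃` satisfies the four-way partition property on `X̃` if and only if every
3-element subset of `X` is contained in some `Yᵢ` (i.e. `S` has no cross triple with
respect to the finest partition). -/
theorem fourWay_rooted_iff_no_cross_triple {α : Type*} [DecidableEq α]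
    (X : Finset α) (ρ : α) (hρ : ρ ∉ X)
    (S : Finset (Finset α)) (hS : ∀ Y ∈ S, Y ⊆ X) :
    (∀ X1 X2 X3 X4 : Finset α,
      X1.Nonempty → X2.Nonempty → X3.Nonempty → X4.Nonempty →
      X1 ∪ X2 ∪ X3 ∪ X4 = insert ρ X →
      Disjoint X1 X2 → Disjoint X1 X3 → Disjoint X1 X4 →
      Disjoint X2 X3 → Disjoint X2 X4 → Disjoint X3 X4 →
      ∃ x1 ∈ X1, ∃ x2 ∈ X2, ∃ x3 ∈ X3, ∃ x4 ∈ X4,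
        ∃ Y ∈ S.image (insert ρ), ({x1, x2, x3, x4} : Finset α) ⊆ Y) ↔
    (∀ T : Finset α, T ⊆ X → T.card = 3 → ∃ Y ∈ S, T ⊆ Y) := by
  constructor
  · intro h T hT hTcard
    obtain ⟨a, b, c, hab, hac, hbc, rfl⟩ := Finset.card_eq_three.mp hTcard
    have haX : a ∈ X := hT (by simp)
    have hbX : b ∈ X := hT (by simp)
    have hcX : c ∈ X := hT (by simp)
    have hTU : ({a, b, c} : Finset α) ⊆ insert ρ X :=
      hT.trans (Finset.subset_insert _ _)
    obtain ⟨x1, hx1, x2, hx2, x3, hx3, x4, hx4, Y, hYmem, hsub⟩ :=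
      h {a} {b} {c} (insert ρ X \ {a, b, c})
        (Finset.singleton_nonempty a) (Finset.singleton_nonempty b)
        (Finset.singleton_nonempty c)
        ⟨ρ, Finset.mem_sdiff.mpr ⟨Finset.mem_insert_self _ _, by
          simp only [Finset.mem_insert, Finset.mem_singleton]
          rintro (rfl | rfl | rfl) <;> exact hρ (by assumption)⟩⟩
        (by
          have : ({a} ∪ {b} ∪ {c} : Finset α) = {a, b, c} := by
            ext x; simp [or_assoc]
          rw [this, Finset.union_sdiff_of_subset hTU])
        (Finset.disjoint_singleton.mpr hab) (Finset.disjoint_singleton.mpr hac)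
        (Finset.disjoint_sdiff.mono_left (by simp))
        (Finset.disjoint_singleton.mpr hbc)
        (Finset.disjoint_sdiff.mono_left (by simp))
        (Finset.disjoint_sdiff.mono_left (by simp))
    rw [Finset.mem_singleton] at hx1 hx2 hx3
    subst hx1; subst hx2; subst hx3
    obtain ⟨Y0, hY0, rfl⟩ := Finset.mem_image.mp hYmem
    refine ⟨Y0, hY0, ?_⟩
    intro x hx
    have hxρ : x ∈ insert ρ Y0 := hsub (by
      simp only [Finset.mem_insert, Finset.mem_singleton] at hx ⊢
      tauto)
    rcases Finset.mem_insert.mp hxρ with rfl | h'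
    · exact absurd (hT hx) hρ
    · exact h'
  · intro h3 X1 X2 X3 X4 h1 h2 h3' h4 hunion d12 d13 d14 d23 d24 d34
    have hρmem : ρ ∈ X1 ∪ X2 ∪ X3 ∪ X4 := hunion ▸ Finset.mem_insert_self ρ X
    have s1 : X1 ⊆ insert ρ X := hunion ▸ (by intro x hx; simp [hx] : X1 ⊆ X1 ∪ X2 ∪ X3 ∪ X4)
    have s2 : X2 ⊆ insert ρ X := hunion ▸ (by intro x hx; simp [hx] : X2 ⊆ X1 ∪ X2 ∪ X3 ∪ X4)
    have s3 : X3 ⊆ insert ρ X := hunion ▸ (by intro x hx; simp [hx] : X3 ⊆ X1 ∪ X2 ∪ X3 ∪ X4)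
    have s4 : X4 ⊆ insert ρ X := hunion ▸ (by intro x hx; simp [hx] : X4 ⊆ X1 ∪ X2 ∪ X3 ∪ X4)
    simp only [Finset.mem_union] at hρmem
    have key : ∀ Y ∈ S, (∀ x ∈ insert ρ Y, x ∈ insert ρ Y) := fun _ _ _ h => h
    rcases hρmem with ((hρ1 | hρ2) | hρ3) | hρ4
    · obtain ⟨b, hb, c, hc, d, hd, Y, hY, hbY, hcY, hdY⟩ :=
        aux_triple X ρ S h3 X2 X3 X4 h2 h3' h4 s2 s3 s4
          (fun h => Finset.disjoint_left.mp d12 hρ1 h)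
          (fun h => Finset.disjoint_left.mp d13 hρ1 h)
          (fun h => Finset.disjoint_left.mp d14 hρ1 h)
          d23 d24 d34
      exact ⟨ρ, hρ1, b, hb, c, hc, d, hd, insert ρ Y,
        Finset.mem_image_of_mem _ hY, by
          simp [Finset.insert_subset_iff, hbY, hcY, hdY]⟩
    · obtain ⟨b, hb, c, hc, d, hd, Y, hY, hbY, hcY, hdY⟩ :=
        aux_triple X ρ S h3 X1 X3 X4 h1 h3' h4 s1 s3 s4
          (fun h => Finset.disjoint_left.mp d12 h hρ2)
          (fun h => Finset.disjoint_left.mp d23 hρ2 h)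
          (fun h => Finset.disjoint_left.mp d24 hρ2 h)
          d13 d14 d34
      exact ⟨b, hb, ρ, hρ2, c, hc, d, hd, insert ρ Y,
        Finset.mem_image_of_mem _ hY, by
          simp [Finset.insert_subset_iff, hbY, hcY, hdY]⟩
    · obtain ⟨b, hb, c, hc, d, hd, Y, hY, hbY, hcY, hdY⟩ :=
        aux_triple X ρ S h3 X1 X2 X4 h1 h2 h4 s1 s2 s4
          (fun h => Finset.disjoint_left.mp d13 h hρ3)
          (fun h => Finset.disjoint_left.mp d23 h hρ3)
          (fun h => Finset.disjoint_left.mp d34 hρ3 h)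
          d12 d14 d24
      exact ⟨b, hb, c, hc, ρ, hρ3, d, hd, insert ρ Y,
        Finset.mem_image_of_mem _ hY, by
          simp [Finset.insert_subset_iff, hbY, hcY, hdY]⟩
    · obtain ⟨b, hb, c, hc, d, hd, Y, hY, hbY, hcY, hdY⟩ :=
        aux_triple X ρ S h3 X1 X2 X3 h1 h2 h3' s1 s2 s3
          (fun h => Finset.disjoint_left.mp d14 h hρ4)
          (fun h => Finset.disjoint_left.mp d24 h hρ4)
          (fun h => Finset.disjoint_left.mp d34 h hρ4)
          d12 d13 d23
      exact ⟨b, hb, c, hc, d, hd, ρ, hρ4, insert ρ Y,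
        Finset.mem_image_of_mem _ hY, by
          simp [Finset.insert_subset_iff, hbY, hcY, hdY]⟩
end

section
/- The quartet splits {ax|bc, ax|bd, ax|cd, bx|cd} on {a,b,c,d,x} together imply ab|cd: every unrooted binary phylogenetic tree on {a,b,c,d,x} displaying all four splits also displays ab|cd. -/
/-!
In a tree the `c`–`d` path is unique, so `ax|cd` and `bx|cd` say that this one path avoids
both the `a`–`x` and the `x`–`b` paths; it then avoids the `a`–`b` path, which runs inside
their union.
-/

/-- A graph `G` displays the quartet split `wx|yz` if the path between `w` and `x` is
vertex-disjoint from the path between `y` and `z`. -/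
def DisplaysSplit {V : Type*} (G : SimpleGraph V) (w x y z : V) : Prop :=
  ∃ (p : G.Walk w x) (q : G.Walk y z),
    p.IsPath ∧ q.IsPath ∧ ∀ v ∈ p.support, v ∉ q.support

namespace SimpleGraph.IsAcyclic

variable {V : Type*} {G : SimpleGraph V}

theorem displaysSplit_of_shared_endpoint (hG : G.IsAcyclic) {a b c d x : V}
    (hax : DisplaysSplit G a x c d) (hbx : DisplaysSplit G b x c d) :
    DisplaysSplit G a b c d := by
  classical
  obtain ⟨p, q, -, hq, hpq⟩ := hax
  obtain ⟨p', q', -, hq', hpq'⟩ := hbx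
  have hqq' : q = q' :=
    congrArg Subtype.val ((hG.subsingleton_path c d).elim ⟨q, hq⟩ ⟨q', hq'⟩)
  subst hqq'
  refine ⟨(p.append p'.reverse).bypass, q, Walk.bypass_isPath _, hq, fun v hv => ?_⟩
  have hv' := Walk.support_bypass_subset_support _ hv
  rw [Walk.mem_support_append_iff, Walk.support_reverse, List.mem_reverse] at hv'
  exact hv'.elim (hpq v) (hpq' v)

end SimpleGraph.IsAcyclic

theorem quartet_rule_3_general
    {V : Type*} (G : SimpleGraph V) (hG : G.IsTree)
    (a b c d x : V)
    (h3 : DisplaysSplit G a x c d) (h4 : DisplaysSplit G b x c d) :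
    DisplaysSplit G a b c d :=
  hG.isAcyclic.displaysSplit_of_shared_endpoint h3 h4

/-- The quartet splits `{ax|bc, ax|bd, ax|cd, bx|cd}` together imply `ab|cd` on the leaf
set `{a,b,c,d,x}`. -/
theorem quartet_rule_3
    {V : Type*} [Finite V] (G : SimpleGraph V) (hG : G.IsTree)
    (hdeg : ∀ v : V, (G.neighborSet v).ncard = 1 ∨ (G.neighborSet v).ncard = 3)
    (a b c d x : V) (hdist : ([a, b, c, d, x] : List V).Nodup)
    (ha : (G.neighborSet a).ncard = 1) (hb : (G.neighborSet b).ncard = 1)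
    (hc : (G.neighborSet c).ncard = 1) (hd : (G.neighborSet d).ncard = 1)
    (hx : (G.neighborSet x).ncard = 1)
    (hleaves : ∀ v : V, (G.neighborSet v).ncard = 1 → v ∈ ({a, b, c, d, x} : Set V))
    (h1 : DisplaysSplit G a x b c) (h2 : DisplaysSplit G a x b d)
    (h3 : DisplaysSplit G a x c d) (h4 : DisplaysSplit G b x c d) :
    DisplaysSplit G a b c d :=
  quartet_rule_3_general G hG a b c d x h3 h4
end

section
/- The quartet splits {ax|bc, ax|bd, ax|cd, bd|cx} on {a,b,c,d,x} together imply ac|bd: every unrooted binary phylogenetic tree displaying all four splits also displays ac|bd. -/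
namespace DisplaysSplit

variable {V : Type*} {G : SimpleGraph V} {w x y z u : V}

theorem symm (h : DisplaysSplit G w x y z) : DisplaysSplit G y z w x := by
  obtain ⟨p, q, hp, hq, hdisj⟩ := h
  exact ⟨q, p, hq, hp, fun v hvq hvp => hdisj v hvp hvq⟩

theorem reverse_left (h : DisplaysSplit G w x y z) : DisplaysSplit G x w y z := by
  obtain ⟨p, q, hp, hq, hdisj⟩ := h
  refine ⟨p.reverse, q, hp.reverse, hq, fun v hv => hdisj v ?_⟩
  rwa [SimpleGraph.Walk.support_reverse, List.mem_reverse] at hv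

theorem trans (hG : G.IsAcyclic) (h₁ : DisplaysSplit G w x y z)
    (h₂ : DisplaysSplit G x u y z) : DisplaysSplit G w u y z := by
  classical
  obtain ⟨p₁, q₁, -, hq₁, hdisj₁⟩ := h₁
  obtain ⟨p₂, q₂, -, hq₂, hdisj₂⟩ := h₂
  have hq : q₂ = q₁ := congrArg Subtype.val ((hG.subsingleton_path y z).elim ⟨q₂, hq₂⟩ ⟨q₁, hq₁⟩)
  subst hq
  refine ⟨(p₁.append p₂).bypass, q₂, (p₁.append p₂).bypass_isPath, hq₂, fun v hv => ?_⟩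
  rcases (SimpleGraph.Walk.mem_support_append_iff _ _).mp
      ((p₁.append p₂).support_bypass_subset_support hv) with hv₁ | hv₂
  · exact hdisj₁ v hv₁
  · exact hdisj₂ v hv₂

end DisplaysSplit

theorem quartet_rule_4_general
    {V : Type*} (G : SimpleGraph V) (hG : G.IsTree)
    (a b c d x : V)
    (h2 : DisplaysSplit G a x b d) (h4 : DisplaysSplit G b d c x) :
    DisplaysSplit G a c b d :=
  h2.trans hG.isAcyclic h4.symm.reverse_left

/-- The quartet splits `{ax|bc, ax|bd, ax|cd, bd|cx}` together imply `ac|bd` on the leaf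
set `{a,b,c,d,x}`. -/
theorem quartet_rule_4
    {V : Type*} [Finite V] (G : SimpleGraph V) (hG : G.IsTree)
    (hdeg : ∀ v : V, (G.neighborSet v).ncard = 1 ∨ (G.neighborSet v).ncard = 3)
    (a b c d x : V) (hdist : ([a, b, c, d, x] : List V).Nodup)
    (ha : (G.neighborSet a).ncard = 1) (hb : (G.neighborSet b).ncard = 1)
    (hc : (G.neighborSet c).ncard = 1) (hd : (G.neighborSet d).ncard = 1)
    (hx : (G.neighborSet x).ncard = 1)
    (hleaves : ∀ v : V, (G.neighborSet v).ncard = 1 → v ∈ ({a, b, c, d, x} : Set V))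
    (h1 : DisplaysSplit G a x b c) (h2 : DisplaysSplit G a x b d)
    (h3 : DisplaysSplit G a x c d) (h4 : DisplaysSplit G b d c x) :
    DisplaysSplit G a c b d :=
  quartet_rule_4_general G hG a b c d x h2 h4
end

section
/- Let X be a finite set, |X| ≥ 4, and S a collection of subsets of X. Let G₀ = {4-subsets of X contained in some member of S} and let G* be the closure of G₀ under the fixing-taxon rule. If G* contains all 4-subsets of X, then S satisfies the four-way partition property. -/
/-- If every 4-subset of `X` belongs to the closure, under the fixing-taxon rule, of the
collection `G₀` of 4-subsets of `X` contained in some member of `S` (the closure being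
the least superset of `G₀` closed under the rule, i.e. the intersection of all closed
supersets `K`), then `S` satisfies the four-way partition property. -/
theorem fourWay_of_closure_all {α : Type*} [DecidableEq α]
    (X : Finset α) (hX : 4 ≤ X.card) (S : Finset (Finset α)) (hS : ∀ Y ∈ S, Y ⊆ X)
    (hclosure : ∀ Q : Finset α, Q ⊆ X → Q.card = 4 →
      ∀ K : Set (Finset α),
        (∀ Q' : Finset α, Q' ⊆ X → Q'.card = 4 → (∃ Y ∈ S, Q' ⊆ Y) → Q' ∈ K) →
        (∀ Q' : Finset α, Q' ⊆ X → Q'.card = 4 →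
          (∃ x ∈ X, x ∉ Q' ∧ ∀ a ∈ Q', insert x (Q'.erase a) ∈ K) → Q' ∈ K) →
        Q ∈ K) :
    ∀ X1 X2 X3 X4 : Finset α,
      X1.Nonempty → X2.Nonempty → X3.Nonempty → X4.Nonempty →
      X1 ∪ X2 ∪ X3 ∪ X4 = X →
      Disjoint X1 X2 → Disjoint X1 X3 → Disjoint X1 X4 →
      Disjoint X2 X3 → Disjoint X2 X4 → Disjoint X3 X4 →
      ∃ x1 ∈ X1, ∃ x2 ∈ X2, ∃ x3 ∈ X3, ∃ x4 ∈ X4,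
        ∃ Y ∈ S, ({x1, x2, x3, x4} : Finset α) ⊆ Y := by
  intro X1 X2 X3 X4 h1 h2 h3 h4 hU d12 d13 d14 d23 d24 d34
  obtain ⟨x1, hx1⟩ := h1
  obtain ⟨x2, hx2⟩ := h2
  obtain ⟨x3, hx3⟩ := h3
  obtain ⟨x4, hx4⟩ := h4
  have n12 : x1 ≠ x2 := fun h => Finset.disjoint_left.mp d12 hx1 (h ▸ hx2)
  have n13 : x1 ≠ x3 := fun h => Finset.disjoint_left.mp d13 hx1 (h ▸ hx3)
  have n14 : x1 ≠ x4 := fun h => Finset.disjoint_left.mp d14 hx1 (h ▸ hx4)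
  have n23 : x2 ≠ x3 := fun h => Finset.disjoint_left.mp d23 hx2 (h ▸ hx3)
  have n24 : x2 ≠ x4 := fun h => Finset.disjoint_left.mp d24 hx2 (h ▸ hx4)
  have n34 : x3 ≠ x4 := fun h => Finset.disjoint_left.mp d34 hx3 (h ▸ hx4)
  have hQX : ({x1, x2, x3, x4} : Finset α) ⊆ X := by
    rw [← hU]
    intro z hz
    simp only [Finset.mem_insert, Finset.mem_singleton] at hz
    simp only [Finset.mem_union]
    rcases hz with rfl | rfl | rfl | rfl
    · exact Or.inl (Or.inl (Or.inl hx1))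
    · exact Or.inl (Or.inl (Or.inr hx2))
    · exact Or.inl (Or.inr hx3)
    · exact Or.inr hx4
  have hcard : ({x1, x2, x3, x4} : Finset α).card = 4 := by
    rw [Finset.card_insert_of_notMem (by simp [n12, n13, n14]),
        Finset.card_insert_of_notMem (by simp [n23, n24]),
        Finset.card_insert_of_notMem (by simp [n34]),
        Finset.card_singleton]
  have key := hclosure {x1, x2, x3, x4} hQX hcard
    { Q | (Q ∩ X1).Nonempty → (Q ∩ X2).Nonempty → (Q ∩ X3).Nonempty → (Q ∩ X4).Nonempty →
      ∃ a1 ∈ X1, ∃ a2 ∈ X2, ∃ a3 ∈ X3, ∃ a4 ∈ X4, ∃ Y ∈ S,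
        ({a1, a2, a3, a4} : Finset α) ⊆ Y }
    ?base ?fix
  · exact key ⟨x1, Finset.mem_inter.mpr ⟨by simp, hx1⟩⟩
      ⟨x2, Finset.mem_inter.mpr ⟨by simp, hx2⟩⟩
      ⟨x3, Finset.mem_inter.mpr ⟨by simp, hx3⟩⟩
      ⟨x4, Finset.mem_inter.mpr ⟨by simp, hx4⟩⟩
  case base =>
    rintro Q' _ _ ⟨Y, hY, hQY⟩ m1 m2 m3 m4
    obtain ⟨a1, ha1⟩ := m1; obtain ⟨a2, ha2⟩ := m2
    obtain ⟨a3, ha3⟩ := m3; obtain ⟨a4, ha4⟩ := m4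
    rw [Finset.mem_inter] at ha1 ha2 ha3 ha4
    refine ⟨a1, ha1.2, a2, ha2.2, a3, ha3.2, a4, ha4.2, Y, hY, ?_⟩
    intro z hz
    simp only [Finset.mem_insert, Finset.mem_singleton] at hz
    rcases hz with rfl | rfl | rfl | rfl
    exacts [hQY ha1.1, hQY ha2.1, hQY ha3.1, hQY ha4.1]
  case fix =>
    rintro Q' hQ'X _ ⟨x, hxX, hxQ, hall⟩ m1 m2 m3 m4
    obtain ⟨b1, hb1⟩ := m1; obtain ⟨b2, hb2⟩ := m2
    obtain ⟨b3, hb3⟩ := m3; obtain ⟨b4, hb4⟩ := m4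
    rw [Finset.mem_inter] at hb1 hb2 hb3 hb4
    have e12 : b1 ≠ b2 := fun h => Finset.disjoint_left.mp d12 hb1.2 (h ▸ hb2.2)
    have e13 : b1 ≠ b3 := fun h => Finset.disjoint_left.mp d13 hb1.2 (h ▸ hb3.2)
    have e14 : b1 ≠ b4 := fun h => Finset.disjoint_left.mp d14 hb1.2 (h ▸ hb4.2)
    have e23 : b2 ≠ b3 := fun h => Finset.disjoint_left.mp d23 hb2.2 (h ▸ hb3.2)
    have e24 : b2 ≠ b4 := fun h => Finset.disjoint_left.mp d24 hb2.2 (h ▸ hb4.2)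
    have e34 : b3 ≠ b4 := fun h => Finset.disjoint_left.mp d34 hb3.2 (h ▸ hb4.2)
    rw [← hU] at hxX
    simp only [Finset.mem_union] at hxX
    rcases hxX with ((hx | hx) | hx) | hx
    · refine hall b1 hb1.1 ?_ ?_ ?_ ?_
      · exact ⟨x, Finset.mem_inter.mpr ⟨Finset.mem_insert_self _ _, hx⟩⟩
      · exact ⟨b2, Finset.mem_inter.mpr
          ⟨Finset.mem_insert_of_mem (Finset.mem_erase.mpr ⟨e12.symm, hb2.1⟩), hb2.2⟩⟩
      · exact ⟨b3, Finset.mem_inter.mpr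
          ⟨Finset.mem_insert_of_mem (Finset.mem_erase.mpr ⟨e13.symm, hb3.1⟩), hb3.2⟩⟩
      · exact ⟨b4, Finset.mem_inter.mpr
          ⟨Finset.mem_insert_of_mem (Finset.mem_erase.mpr ⟨e14.symm, hb4.1⟩), hb4.2⟩⟩
    · refine hall b2 hb2.1 ?_ ?_ ?_ ?_
      · exact ⟨b1, Finset.mem_inter.mpr
          ⟨Finset.mem_insert_of_mem (Finset.mem_erase.mpr ⟨e12, hb1.1⟩), hb1.2⟩⟩
      · exact ⟨x, Finset.mem_inter.mpr ⟨Finset.mem_insert_self _ _, hx⟩⟩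
      · exact ⟨b3, Finset.mem_inter.mpr
          ⟨Finset.mem_insert_of_mem (Finset.mem_erase.mpr ⟨e23.symm, hb3.1⟩), hb3.2⟩⟩
      · exact ⟨b4, Finset.mem_inter.mpr
          ⟨Finset.mem_insert_of_mem (Finset.mem_erase.mpr ⟨e24.symm, hb4.1⟩), hb4.2⟩⟩
    · refine hall b3 hb3.1 ?_ ?_ ?_ ?_
      · exact ⟨b1, Finset.mem_inter.mpr
          ⟨Finset.mem_insert_of_mem (Finset.mem_erase.mpr ⟨e13, hb1.1⟩), hb1.2⟩⟩
      · exact ⟨b2, Finset.mem_inter.mpr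
          ⟨Finset.mem_insert_of_mem (Finset.mem_erase.mpr ⟨e23, hb2.1⟩), hb2.2⟩⟩
      · exact ⟨x, Finset.mem_inter.mpr ⟨Finset.mem_insert_self _ _, hx⟩⟩
      · exact ⟨b4, Finset.mem_inter.mpr
          ⟨Finset.mem_insert_of_mem (Finset.mem_erase.mpr ⟨e34.symm, hb4.1⟩), hb4.2⟩⟩
    · refine hall b4 hb4.1 ?_ ?_ ?_ ?_
      · exact ⟨b1, Finset.mem_inter.mpr
          ⟨Finset.mem_insert_of_mem (Finset.mem_erase.mpr ⟨e14, hb1.1⟩), hb1.2⟩⟩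
      · exact ⟨b2, Finset.mem_inter.mpr
          ⟨Finset.mem_insert_of_mem (Finset.mem_erase.mpr ⟨e24, hb2.1⟩), hb2.2⟩⟩
      · exact ⟨b3, Finset.mem_inter.mpr
          ⟨Finset.mem_insert_of_mem (Finset.mem_erase.mpr ⟨e34, hb3.1⟩), hb3.2⟩⟩
      · exact ⟨x, Finset.mem_inter.mpr ⟨Finset.mem_insert_self _ _, hx⟩⟩
end
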